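/- arXiv:2406.05090 — 3 statements merged into one kernel-verified Lean document; each statement's English description precedes it below -/
import Mathlib

section
/- Let (S, 𝒜, P) be a probability space, γ1 : S → ℝ^{g×d} and γ2 : S → ℝ^g random variables, and define Q(φ) = E[‖γ1 φ − γ2‖₂²] for φ ∈ ℝ^d. Let φ¹,…,φᵏ ∈ ℝ^d be such that s ↦ ‖γ1(s) φ^i − γ2(s)‖₂² is integrable for each i = 1,…,k. Then for every ω ∈ Δ_k, Q(φ^ω) ≤ Σ_{i=1}^k ω_i Q(φ^i); i.e., the quality of the aggregated explanation is at least as good as the equivalently weighted qualities of the individual attributions (lower Q is better). -/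
open Matrix BigOperators MeasureTheory

lemma ptwise {k : ℕ} (a : Fin k → ℝ) (ω : Fin k → ℝ) (hω : ∀ i, 0 ≤ ω i)
    (hsum : ∑ i, ω i = 1) : (∑ i, ω i * a i) ^ 2 ≤ ∑ i, ω i * a i ^ 2 := by
  have h := (Even.convexOn_pow (n := 2) even_two).map_sum_le
    (t := Finset.univ) (w := ω) (p := a) (fun i _ => hω i) hsum
    (fun i _ => Set.mem_univ (a i))
  simpa [smul_eq_mul] using h

/-- The quality of the aggregated explanation is at least as good as the
equivalently weighted qualities of the individual attributions:
`Q(φ^ω) ≤ ∑ i, ω i * Q(φ^i)`. -/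
theorem stmt2 {S : Type*} [MeasurableSpace S] (μ : Measure S) [IsProbabilityMeasure μ]
    (g d k : ℕ)
    (γ1 : S → Matrix (Fin g) (Fin d) ℝ) (γ2 : S → Fin g → ℝ)
    (φ : Fin k → Fin d → ℝ)
    (hint : ∀ i, Integrable (fun s => ∑ j, ((γ1 s).mulVec (φ i) j - γ2 s j) ^ 2) μ)
    (ω : Fin k → ℝ) (hω : ∀ i, 0 ≤ ω i) (hsum : ∑ i, ω i = 1) :
    (∫ s, ∑ j, ((γ1 s).mulVec (∑ i, ω i • φ i) j - γ2 s j) ^ 2 ∂μ)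
      ≤ ∑ i, ω i * ∫ s, ∑ j, ((γ1 s).mulVec (φ i) j - γ2 s j) ^ 2 ∂μ := by
  have hG : Integrable (fun s => ∑ i, ω i * ∑ j, ((γ1 s).mulVec (φ i) j - γ2 s j) ^ 2) μ :=
    integrable_finset_sum _ (fun i _ => (hint i).const_mul (ω i))
  have key : ∀ s, ∑ j, ((γ1 s).mulVec (∑ i, ω i • φ i) j - γ2 s j) ^ 2
      ≤ ∑ i, ω i * ∑ j, ((γ1 s).mulVec (φ i) j - γ2 s j) ^ 2 := by
    intro s
    have hR : ∑ i, ω i * ∑ j, ((γ1 s).mulVec (φ i) j - γ2 s j) ^ 2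
        = ∑ j, ∑ i, ω i * ((γ1 s).mulVec (φ i) j - γ2 s j) ^ 2 := by
      simp_rw [Finset.mul_sum]; exact Finset.sum_comm
    rw [hR]
    refine Finset.sum_le_sum fun j _ => ?_
    have ha : (γ1 s).mulVec (∑ i, ω i • φ i) j - γ2 s j
        = ∑ i, ω i * ((γ1 s).mulVec (φ i) j - γ2 s j) := by
      have hv : (γ1 s).mulVec (∑ i, ω i • φ i) = ∑ i, ω i • (γ1 s).mulVec (φ i) := by
        have h := map_sum ((γ1 s).mulVecLin) (fun i => ω i • φ i) Finset.univ
        simp only [Matrix.mulVecLin_apply, Matrix.mulVec_smul] at h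
        exact h
      simp [hv, mul_sub, Finset.sum_sub_distrib, ← Finset.sum_mul, hsum,
        Finset.sum_apply, Pi.smul_apply, smul_eq_mul]
    rw [ha]
    exact ptwise _ _ hω hsum
  have h1 : (∫ s, ∑ j, ((γ1 s).mulVec (∑ i, ω i • φ i) j - γ2 s j) ^ 2 ∂μ)
      ≤ ∫ s, ∑ i, ω i * ∑ j, ((γ1 s).mulVec (φ i) j - γ2 s j) ^ 2 ∂μ := by
    refine integral_mono_of_nonneg ?_ hG (Filter.Eventually.of_forall key)
    exact Filter.Eventually.of_forall fun s =>
      Finset.sum_nonneg fun j _ => sq_nonneg _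
  refine h1.trans_eq ?_
  rw [integral_finset_sum]
  · exact Finset.sum_congr rfl fun i _ => integral_const_mul _ _
  · exact fun i _ => (hint i).const_mul (ω i)
end

section
/- Let (S, 𝒜, P) be a probability space, γ1 : S → ℝ^{g×d} and γ2 : S → ℝ^g random variables, and define Q(φ) = E[‖γ1 φ − γ2‖₂²] for φ ∈ ℝ^d. Let φ¹,…,φᵏ ∈ ℝ^d, let Φ ∈ ℝ^{d×k} have columns φ¹,…,φᵏ, and let Γ = γ1 Φ − γ2·1ᵀ be the random g×k matrix whose j-th column is γ1 φ^j − γ2. Assume each entry of Γᵀ Γ is integrable and let M = E[Γᵀ Γ] ∈ ℝ^{k×k}. Then for every ω ∈ ℝ^k with Σ_{i=1}^k ω_i = 1, Q(Φω) = ωᵀ M ω. -/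
open Matrix BigOperators MeasureTheory

/-- Probabilistic quadratic-form identity: with `Γ(s) = γ1(s)Φ - γ2(s)·1ᵀ` and
`M = E[ΓᵀΓ]`, for any weights summing to one, `Q(Φω) = ωᵀ M ω`. -/
theorem stmt5 {S : Type*} [MeasurableSpace S] (μ : Measure S) [IsProbabilityMeasure μ]
    (g d k : ℕ)
    (γ1 : S → Matrix (Fin g) (Fin d) ℝ) (γ2 : S → Fin g → ℝ)
    (φ : Fin k → Fin d → ℝ)
    (Φ : Matrix (Fin d) (Fin k) ℝ) (hΦ : ∀ j i, Φ j i = φ i j)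
    (Γ : S → Matrix (Fin g) (Fin k) ℝ)
    (hΓ : ∀ s i j, Γ s i j = (γ1 s).mulVec (φ j) i - γ2 s i)
    (hint : ∀ a b : Fin k, Integrable (fun s => ((Γ s)ᵀ * Γ s) a b) μ)
    (M : Matrix (Fin k) (Fin k) ℝ)
    (hM : ∀ a b : Fin k, M a b = ∫ s, ((Γ s)ᵀ * Γ s) a b ∂μ)
    (ω : Fin k → ℝ) (hsum : ∑ i, ω i = 1) :
    (∫ s, ∑ j, ((γ1 s).mulVec (Φ.mulVec ω) j - γ2 s j) ^ 2 ∂μ)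
      = ω ⬝ᵥ M.mulVec ω := by
  have hcol : ∀ s j, (Γ s).mulVec ω j
      = (γ1 s).mulVec (Φ.mulVec ω) j - γ2 s j := by
    intro s j
    simp only [mulVec, dotProduct, hΓ, hΦ, sub_mul, Finset.sum_sub_distrib,
      ← Finset.mul_sum, hsum, mul_one]
    congr 1
    simp only [Finset.sum_mul, Finset.mul_sum]
    rw [Finset.sum_comm]
    exact Finset.sum_congr rfl fun i _ => Finset.sum_congr rfl fun a _ => by ring
  have key : ∀ s, (∑ j, ((γ1 s).mulVec (Φ.mulVec ω) j - γ2 s j) ^ 2)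
      = ∑ a, ∑ b, ω a * (((Γ s)ᵀ * Γ s) a b * ω b) := by
    intro s
    have h : (∑ j, ((γ1 s).mulVec (Φ.mulVec ω) j - γ2 s j) ^ 2)
        = ∑ j, ((Γ s).mulVec ω j) ^ 2 :=
      Finset.sum_congr rfl fun j _ => by rw [hcol]
    rw [h]
    simp only [mulVec, dotProduct, Matrix.mul_apply, transpose_apply,
      sq, Finset.sum_mul, Finset.mul_sum]
    rw [Finset.sum_comm]
    refine Finset.sum_congr rfl fun a _ => ?_
    rw [Finset.sum_comm]
    refine Finset.sum_congr rfl fun b _ => Finset.sum_congr rfl fun j _ => by ring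
  have hib : ∀ a b : Fin k,
      Integrable (fun s => ω a * (((Γ s)ᵀ * Γ s) a b * ω b)) μ :=
    fun a b => ((hint a b).mul_const (ω b)).const_mul (ω a)
  rw [integral_congr_ae (Filter.Eventually.of_forall key)]
  rw [integral_finset_sum _ (fun a _ => integrable_finset_sum _ (fun b _ => hib a b))]
  have h2 : ∀ a : Fin k, (∫ s, ∑ b, ω a * (((Γ s)ᵀ * Γ s) a b * ω b) ∂μ)
      = ∑ b, ω a * (M a b * ω b) := by
    intro a
    rw [integral_finset_sum _ fun b _ => hib a b]
    refine Finset.sum_congr rfl fun b _ => ?_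
    rw [integral_const_mul, integral_mul_const, hM]
  simp only [h2, dotProduct, mulVec, Finset.mul_sum]
end

section
/- Let g, k, m ≥ 1 and let A^{(1)},…,A^{(m)} ∈ ℝ^{g×k} and b^{(1)},…,b^{(m)} ∈ ℝ^g satisfy: (i) every entry of every A^{(i)} is bounded in absolute value by c1, and (ii) ‖A^{(i)} ω − b^{(i)}‖₂² ≤ c2 for every i and every ω ∈ Δ_k. Let ε = (ε_1,…,ε_m) be uniformly distributed on {−1,1}^m. Then the empirical Rademacher complexity of the squared-loss class over the simplex satisfies (1/m) · E_ε[ sup_{ω ∈ Δ_k} Σ_{i=1}^m ε_i ‖A^{(i)} ω − b^{(i)}‖₂² ] ≤ 2 c1 √(2 g c2) · √(2 ln(2k) / m). -/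
/-!
Expanding `‖Aω - b‖²` with `∑ ωⱼ = 1` writes the loss of each sample as the average, with
weights `ωⱼ ωₗ`, of the Gram entries `⟨A eⱼ - b, A eₗ - b⟩`. Hence the supremum over the simplex
is at most a maximum over the `k²` pairs `(j, l)`. For a fixed sample these entries range over
an interval of length `2 · (2 c1 √g) · √c2`: by Cauchy–Schwarz, comparing two entries costs a
column difference (at most `2 c1 √g`) against a vertex loss (at most `√c2`). Centering each
sample at the midpoint of its interval does not change the Rademacher average, and Massart's
finite class lemma bounds the rest; finally `log (k²) ≤ 2 log (2k)`.
-/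

open Matrix BigOperators
open Finset Filter Topology

def signVec {ι : Type*} (ε : ι → Bool) : ι → ℝ := fun i => if ε i then 1 else -1

lemma signVec_not {ι : Type*} (ε : ι → Bool) : signVec (fun i => !ε i) = -signVec ε := by
  ext i; cases h : ε i <;> simp [signVec, h]

section Rademacher

variable {ι : Type*} [Fintype ι] [DecidableEq ι]

lemma sum_signVec_dotProduct (x : ι → ℝ) : ∑ ε : ι → Bool, signVec ε ⬝ᵥ x = 0 := by
  have hflip := Fintype.sum_equiv (Equiv.piCongrRight fun _ => Equiv.boolNot)
    (fun ε => signVec ε ⬝ᵥ x) (fun ε => -(signVec ε ⬝ᵥ x))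
    (fun ε => by simp [← neg_dotProduct, ← signVec_not])
  rw [sum_neg_distrib] at hflip
  linarith

/-- Hoeffding's lemma for Rademacher sums. -/
lemma sum_exp_signVec_dotProduct_le (a : ι → ℝ) :
    ∑ ε : ι → Bool, Real.exp (signVec ε ⬝ᵥ a) ≤
      2 ^ Fintype.card ι * Real.exp (∑ i, a i ^ 2 / 2) := by
  calc ∑ ε : ι → Bool, Real.exp (signVec ε ⬝ᵥ a)
      = ∏ i, ∑ s : Bool, Real.exp (signVec (fun _ => s) i * a i) := by
        rw [Fintype.prod_sum]
        simp [dotProduct, Real.exp_sum, signVec]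
    _ = ∏ i, 2 * Real.cosh (a i) := by
        simp [signVec, Real.cosh_eq, mul_div_cancel₀]
    _ ≤ ∏ i, 2 * Real.exp (a i ^ 2 / 2) :=
        prod_le_prod (fun i _ => by positivity)
          (fun i _ => by gcongr; exact Real.cosh_le_exp_half_sq _)
    _ = 2 ^ Fintype.card ι * Real.exp (∑ i, a i ^ 2 / 2) := by
        rw [prod_mul_distrib, prod_const, Real.exp_sum, card_univ]

end Rademacher

lemma le_two_mul_sqrt_mul_of_forall_pos {x a b : ℝ} (ha : 0 ≤ a) (hb : 0 ≤ b)
    (h : ∀ s > 0, x ≤ a / s + b * s) : x ≤ 2 * √(a * b) := by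
  -- perturbing `a` and `b` by `δ > 0` covers the cases `a = 0` and `b = 0`
  have hδ : ∀ δ > 0, x ≤ 2 * √((a + δ) * (b + δ)) := by
    intro δ hδ
    have hA : 0 < a + δ := by linarith
    have hB : 0 < b + δ := by linarith
    have hA' : 0 < √(a + δ) := Real.sqrt_pos.2 hA
    have hB' : 0 < √(b + δ) := Real.sqrt_pos.2 hB
    calc x ≤ a / (√(a + δ) / √(b + δ)) + b * (√(a + δ) / √(b + δ)) := h _ (div_pos hA' hB')
      _ ≤ (a + δ) / (√(a + δ) / √(b + δ)) + (b + δ) * (√(a + δ) / √(b + δ)) := by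
        gcongr <;> linarith
      _ = 2 * √((a + δ) * (b + δ)) := by
        rw [Real.sqrt_mul hA.le]
        field_simp
        rw [Real.sq_sqrt hA.le, Real.sq_sqrt hB.le]
        ring
  have hlim : Tendsto (fun δ => 2 * √((a + δ) * (b + δ))) (𝓝[>] 0) (𝓝 (2 * √(a * b))) := by
    have hc : Continuous fun δ : ℝ => 2 * √((a + δ) * (b + δ)) := by fun_prop
    simpa using (hc.tendsto 0).mono_left nhdsWithin_le_nhds
  exact ge_of_tendsto hlim (eventually_nhdsWithin_of_forall hδ)

lemma exp_sum_div_card_le {Ω : Type*} [Fintype Ω] [Nonempty Ω] (f : Ω → ℝ) :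
    Real.exp ((∑ ω, f ω) / Fintype.card Ω) ≤ (∑ ω, Real.exp (f ω)) / Fintype.card Ω := by
  have hN : (0 : ℝ) < Fintype.card Ω := by exact_mod_cast Fintype.card_pos
  have := convexOn_exp.map_sum_le (t := univ) (w := fun _ => 1 / (Fintype.card Ω : ℝ)) (p := f)
    (fun _ _ => by positivity) (by simp [card_univ, hN.ne']) (fun _ _ => Set.mem_univ _)
  simpa [← mul_sum, div_eq_inv_mul] using this

section Massart

variable {ι κ : Type*} [Fintype ι] [DecidableEq ι] [Fintype κ] [Nonempty κ]

lemma exp_mul_sup'_le_sum (s : ℝ) (f : κ → ℝ) :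
    Real.exp (s * univ.sup' univ_nonempty f) ≤ ∑ p, Real.exp (s * f p) := by
  obtain ⟨p, -, hp⟩ := exists_mem_eq_sup' univ_nonempty f
  rw [hp]
  exact single_le_sum (f := fun p => Real.exp (s * f p)) (fun _ _ => (Real.exp_pos _).le)
    (mem_univ p)

/-- Massart's finite class lemma: Jensen for `exp`, the union bound for the maximum, Hoeffding,
and an optimal choice of the temperature `s`. -/
lemma sum_sup'_signVec_dotProduct_div_le (x : κ → ι → ℝ) {V : ℝ}
    (hV : ∀ p, ∑ i, x p i ^ 2 ≤ V) :
    (∑ ε : ι → Bool, univ.sup' univ_nonempty fun p => signVec ε ⬝ᵥ x p) / 2 ^ Fintype.card ι ≤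
      √(2 * V * Real.log (Fintype.card κ)) := by
  set M : (ι → Bool) → ℝ := fun ε => univ.sup' univ_nonempty fun p => signVec ε ⬝ᵥ x p
  set L := Real.log (Fintype.card κ)
  have hcard : (Fintype.card (ι → Bool) : ℝ) = 2 ^ Fintype.card ι := by simp
  have hV0 : 0 ≤ V := (sum_nonneg fun _ _ => sq_nonneg _).trans (hV (Classical.arbitrary κ))
  have hL : 0 ≤ L := Real.log_nonneg (by exact_mod_cast Fintype.card_pos)
  suffices h : ∀ s > 0, (∑ ε, M ε) / 2 ^ Fintype.card ι ≤ L / s + V / 2 * s by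
    calc _ ≤ 2 * √(L * (V / 2)) := le_two_mul_sqrt_mul_of_forall_pos hL (by positivity) h
      _ = √(2 * V * L) := by
        rw [show 2 * V * L = 2 ^ 2 * (L * (V / 2)) by ring,
          Real.sqrt_mul (by norm_num : (0 : ℝ) ≤ 2 ^ 2), Real.sqrt_sq zero_le_two]
  intro s hs
  have hmgf : ∑ ε, Real.exp (s * M ε) ≤
      2 ^ Fintype.card ι * (Fintype.card κ * Real.exp (s ^ 2 * V / 2)) :=
    calc ∑ ε, Real.exp (s * M ε) ≤ ∑ ε : ι → Bool, ∑ p, Real.exp (signVec ε ⬝ᵥ (s • x p)) := by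
          refine sum_le_sum fun ε _ => ?_
          simp only [dotProduct_smul, smul_eq_mul]
          exact exp_mul_sup'_le_sum s _
      _ = ∑ p, ∑ ε : ι → Bool, Real.exp (signVec ε ⬝ᵥ (s • x p)) := sum_comm
      _ ≤ ∑ p : κ, 2 ^ Fintype.card ι * Real.exp (s ^ 2 * V / 2) := by
          refine sum_le_sum fun p _ => (sum_exp_signVec_dotProduct_le _).trans ?_
          gcongr
          simp only [Pi.smul_apply, smul_eq_mul, mul_pow, ← sum_div, ← mul_sum]
          gcongr
          exact hV p
      _ = _ := by rw [sum_const, card_univ, nsmul_eq_mul]; ring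
  have hexp : Real.exp (s * ((∑ ε, M ε) / 2 ^ Fintype.card ι)) ≤
      Fintype.card κ * Real.exp (s ^ 2 * V / 2) := by
    have := exp_sum_div_card_le fun ε => s * M ε
    rw [← mul_sum, hcard, mul_div_assoc] at this
    refine this.trans ?_
    rw [div_le_iff₀ (by positivity)]
    linarith
  have hlog := (Real.le_log_iff_exp_le (by positivity)).2 hexp
  rw [Real.log_mul (by positivity) (Real.exp_pos _).ne', Real.log_exp] at hlog
  rw [div_add' _ _ _ hs.ne', le_div_iff₀ hs]
  nlinarith

lemma sum_sup'_signVec_dotProduct_div_le_of_sub_le (x : κ → ι → ℝ) {B : ℝ} (hB : 0 ≤ B)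
    (hx : ∀ p p' i, x p i - x p' i ≤ 2 * B) :
    (∑ ε : ι → Bool, univ.sup' univ_nonempty fun p => signVec ε ⬝ᵥ x p) / 2 ^ Fintype.card ι ≤
      B * √(2 * Fintype.card ι * Real.log (Fintype.card κ)) := by
  set c : ι → ℝ := fun i =>
    ((univ.sup' univ_nonempty fun p => x p i) + univ.inf' univ_nonempty fun p => x p i) / 2
  have hc : ∀ p i, |x p i - c i| ≤ B := by
    intro p i
    obtain ⟨p₁, -, h₁⟩ := exists_mem_eq_sup' univ_nonempty fun p => x p i
    obtain ⟨p₂, -, h₂⟩ := exists_mem_eq_inf' univ_nonempty fun p => x p i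
    have hle : x p i ≤ x p₁ i := h₁ ▸ le_sup' (fun p => x p i) (mem_univ p)
    have hge : x p₂ i ≤ x p i := h₂ ▸ inf'_le (fun p => x p i) (mem_univ p)
    simp only [c, h₁, h₂, abs_le]
    constructor <;> linarith [hx p₁ p₂ i]
  have hshift : ∀ ε : ι → Bool, (univ.sup' univ_nonempty fun p => signVec ε ⬝ᵥ x p) =
      (univ.sup' univ_nonempty fun p => signVec ε ⬝ᵥ (x p - c)) + signVec ε ⬝ᵥ c := by
    intro ε
    simp [sup'_add, dotProduct_sub]
  calc _ = (∑ ε : ι → Bool, univ.sup' univ_nonempty fun p => signVec ε ⬝ᵥ (x p - c)) /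
        2 ^ Fintype.card ι := by
        simp only [hshift, sum_add_distrib, sum_signVec_dotProduct, add_zero]
    _ ≤ √(2 * (Fintype.card ι * B ^ 2) * Real.log (Fintype.card κ)) := by
        refine sum_sup'_signVec_dotProduct_div_le _ fun p => ?_
        calc ∑ i, (x p - c) i ^ 2 ≤ ∑ _i : ι, B ^ 2 :=
              sum_le_sum fun i _ => sq_le_sq' (abs_le.1 (hc p i)).1 (abs_le.1 (hc p i)).2
          _ = Fintype.card ι * B ^ 2 := by simp
    _ = B * √(2 * Fintype.card ι * Real.log (Fintype.card κ)) := by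
        rw [show 2 * (Fintype.card ι * B ^ 2) * Real.log (Fintype.card κ) =
            B ^ 2 * (2 * Fintype.card ι * Real.log (Fintype.card κ)) by ring,
          Real.sqrt_mul (sq_nonneg B), Real.sqrt_sq hB]

end Massart

section SquaredLoss

variable {n κ : Type*}

lemma mulVec_sub_eq_sum_smul [Fintype κ] (A : Matrix n κ ℝ) (b : n → ℝ) {ω : κ → ℝ}
    (hω : ∑ j, ω j = 1) :
    A *ᵥ ω - b = ∑ j, ω j • (Aᵀ j - b) := by
  ext r
  simp only [Pi.sub_apply, Finset.sum_apply, Pi.smul_apply, smul_eq_mul, mul_comm (ω _), sub_mul,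
    sum_sub_distrib, ← mul_sum, hω, mul_one, mulVec, dotProduct, transpose_apply]

lemma sum_sq_mulVec_sub_eq [Fintype n] [Fintype κ] (A : Matrix n κ ℝ) (b : n → ℝ) {ω : κ → ℝ}
    (hω : ∑ j, ω j = 1) :
    ∑ r, ((A *ᵥ ω) r - b r) ^ 2 =
      ∑ p : κ × κ, ω p.1 * ω p.2 * ((Aᵀ p.1 - b) ⬝ᵥ (Aᵀ p.2 - b)) := by
  have h : ∑ r, ((A *ᵥ ω) r - b r) ^ 2 = (A *ᵥ ω - b) ⬝ᵥ (A *ᵥ ω - b) := by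
    simp [dotProduct, sq]
  rw [h, mulVec_sub_eq_sum_smul A b hω, Fintype.sum_prod_type, sum_dotProduct]
  simp only [dotProduct_sum, smul_dotProduct, dotProduct_smul, smul_eq_mul]
  exact sum_congr rfl fun _ _ => sum_congr rfl fun _ _ => by ring

lemma sum_mul_mul_le_sup' [Fintype κ] [Nonempty κ] {ω : κ → ℝ} (hω : ω ∈ stdSimplex ℝ κ)
    (f : κ × κ → ℝ) : ∑ p : κ × κ, ω p.1 * ω p.2 * f p ≤ univ.sup' univ_nonempty f :=
  calc ∑ p : κ × κ, ω p.1 * ω p.2 * f p ≤ ∑ p : κ × κ, ω p.1 * ω p.2 * univ.sup' univ_nonempty f :=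
        sum_le_sum fun p _ => by
          gcongr; exacts [mul_nonneg (hω.1 _) (hω.1 _), le_sup' f (mem_univ p)]
    _ = univ.sup' univ_nonempty f := by
        rw [← sum_mul, Fintype.sum_prod_type, ← sum_mul_sum, hω.2, one_mul, one_mul]

lemma dotProduct_sub_dotProduct_le [Fintype n] (u : κ → n → ℝ) {R D : ℝ}
    (hR : ∀ j, ∑ r, u j r ^ 2 ≤ R) (hD : ∀ j j', ∑ r, (u j r - u j' r) ^ 2 ≤ D) (j l j' l' : κ) :
    u j ⬝ᵥ u l - u j' ⬝ᵥ u l' ≤ 2 * (√D * √R) := by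
  have hsplit : u j ⬝ᵥ u l - u j' ⬝ᵥ u l' = (u j - u j') ⬝ᵥ u l + u j' ⬝ᵥ (u l - u l') := by
    simp only [sub_dotProduct, dotProduct_sub]; ring
  have h₁ : (u j - u j') ⬝ᵥ u l ≤ √D * √R :=
    (Real.sum_mul_le_sqrt_mul_sqrt univ _ _).trans
      (by gcongr; exacts [hD j j', hR l])
  have h₂ : u j' ⬝ᵥ (u l - u l') ≤ √D * √R :=
    (Real.sum_mul_le_sqrt_mul_sqrt univ _ _).trans
      (by rw [mul_comm]; gcongr; exacts [hD l l', hR j'])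
  linarith

lemma dotProduct_col_sub_sub_le [Fintype n] [Fintype κ] [DecidableEq κ] (A : Matrix n κ ℝ)
    (b : n → ℝ) {c1 c2 : ℝ} (hc1 : 0 ≤ c1) (hA : ∀ r j, |A r j| ≤ c1)
    (hb : ∀ ω ∈ stdSimplex ℝ κ, ∑ r, ((A *ᵥ ω) r - b r) ^ 2 ≤ c2) (j l j' l' : κ) :
    (Aᵀ j - b) ⬝ᵥ (Aᵀ l - b) - (Aᵀ j' - b) ⬝ᵥ (Aᵀ l' - b) ≤
      2 * (2 * c1 * √(Fintype.card n) * √c2) := by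
  have hD : ∀ j j', ∑ r, ((A r j - b r) - (A r j' - b r)) ^ 2 ≤ Fintype.card n * (2 * c1) ^ 2 :=
    fun j j' => calc
      _ ≤ ∑ _r : n, (2 * c1) ^ 2 := by
        refine sum_le_sum fun r _ => sq_le_sq' ?_ ?_ <;>
          linarith [abs_le.1 (hA r j), abs_le.1 (hA r j')]
      _ = Fintype.card n * (2 * c1) ^ 2 := by simp
  have hR : ∀ j, ∑ r, (A r j - b r) ^ 2 ≤ c2 := fun j => by
    simpa [mulVec_single_one] using hb _ (single_mem_stdSimplex ℝ j)
  refine (dotProduct_sub_dotProduct_le (fun j => Aᵀ j - b) hR hD j l j' l').trans_eq ?_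
  rw [Real.sqrt_mul (Nat.cast_nonneg _), Real.sqrt_sq (by positivity)]
  ring

lemma sSup_signVec_dotProduct_sum_sq_mulVec_sub_le {ι : Type*} [Fintype ι] [Fintype n]
    [Fintype κ] [DecidableEq κ] [Nonempty κ] (A : ι → Matrix n κ ℝ) (b : ι → n → ℝ)
    (ε : ι → Bool) :
    sSup {x : ℝ | ∃ ω : κ → ℝ, (∀ l, 0 ≤ ω l) ∧ (∑ l, ω l = 1) ∧
        x = signVec ε ⬝ᵥ fun i => ∑ r, ((A i *ᵥ ω) r - b i r) ^ 2} ≤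
      univ.sup' univ_nonempty fun p : κ × κ =>
        signVec ε ⬝ᵥ fun i => ((A i)ᵀ p.1 - b i) ⬝ᵥ ((A i)ᵀ p.2 - b i) := by
  have hvertex := single_mem_stdSimplex ℝ (Classical.arbitrary κ)
  refine csSup_le ⟨_, _, hvertex.1, hvertex.2, rfl⟩ ?_
  rintro _ ⟨ω, hω0, hω1, rfl⟩
  have hloss : (fun i => ∑ r, ((A i *ᵥ ω) r - b i r) ^ 2) =
      ∑ p : κ × κ, (ω p.1 * ω p.2) • fun i => ((A i)ᵀ p.1 - b i) ⬝ᵥ ((A i)ᵀ p.2 - b i) := by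
    ext i
    simp [sum_sq_mulVec_sub_eq (A i) (b i) hω1]
  rw [hloss, dotProduct_sum]
  simp only [dotProduct_smul, smul_eq_mul]
  exact sum_mul_mul_le_sup' ⟨hω0, hω1⟩ _

end SquaredLoss

lemma one_div_mul_sqrt_log_mul_self_le {c1 : ℝ} (hc1 : 0 ≤ c1) (c2 : ℝ) {g k m : ℕ}
    (hk : 1 ≤ k) (hm : 1 ≤ m) :
    1 / m * (2 * c1 * √g * √c2 * √(2 * m * Real.log (k * k : ℕ))) ≤
      2 * c1 * √(2 * g * c2) * √(2 * Real.log (2 * k) / m) := by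
  have hk0 : (0 : ℝ) < k := by exact_mod_cast hk
  have hm0 : (0 : ℝ) < √m := Real.sqrt_pos.2 (by exact_mod_cast hm)
  calc 1 / m * (2 * c1 * √g * √c2 * √(2 * m * Real.log (k * k : ℕ)))
      ≤ 1 / m * (2 * c1 * √g * √c2 * √(2 * m * (2 * Real.log (2 * k)))) := by
        push_cast
        rw [Real.log_mul hk0.ne' hk0.ne']
        gcongr
        linarith [Real.log_le_log hk0 (by linarith : (k : ℝ) ≤ 2 * k)]
    _ = 2 * c1 * √(2 * g * c2) * √(2 * Real.log (2 * k) / m) := by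
        rw [Real.sqrt_mul (by positivity) c2, Real.sqrt_mul zero_le_two,
          Real.sqrt_div' _ (Nat.cast_nonneg _), Real.sqrt_mul (by positivity),
          Real.sqrt_mul zero_le_two]
        field_simp
        rw [Real.sq_sqrt (Nat.cast_nonneg _)]
        ring

/-- Bound on the empirical Rademacher complexity of the squared-loss class over the
simplex (step (2) in the proof of Theorem 4.3):
`(1/m) E_ε[sup_{ω ∈ Δ_k} ∑ i, ε i ‖A⁽ⁱ⁾ω - b⁽ⁱ⁾‖₂²] ≤ 2 c1 √(2 g c2) √(2 ln(2k)/m)`. -/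
theorem stmt13 (g k m : ℕ) (hg : 1 ≤ g) (hk : 1 ≤ k) (hm : 1 ≤ m) (c1 c2 : ℝ)
    (A : Fin m → Matrix (Fin g) (Fin k) ℝ) (b : Fin m → Fin g → ℝ)
    (hA : ∀ i r j, |A i r j| ≤ c1)
    (hb : ∀ i, ∀ ω : Fin k → ℝ, (∀ l, 0 ≤ ω l) → (∑ l, ω l = 1) →
      ∑ r, ((A i).mulVec ω r - b i r) ^ 2 ≤ c2) :
    (1 / m) * ((∑ ε : Fin m → Bool,
        sSup {x : ℝ | ∃ ω : Fin k → ℝ, (∀ l, 0 ≤ ω l) ∧ (∑ l, ω l = 1) ∧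
          x = ∑ i, (if ε i then (1 : ℝ) else -1) * ∑ r, ((A i).mulVec ω r - b i r) ^ 2}) / 2 ^ m)
      ≤ 2 * c1 * Real.sqrt (2 * g * c2) * Real.sqrt (2 * Real.log (2 * k) / m) := by
  have : Nonempty (Fin k) := ⟨⟨0, hk⟩⟩
  set q : Fin k × Fin k → Fin m → ℝ := fun p i => ((A i)ᵀ p.1 - b i) ⬝ᵥ ((A i)ᵀ p.2 - b i)
  have hc1 : 0 ≤ c1 := (abs_nonneg _).trans (hA ⟨0, hm⟩ ⟨0, hg⟩ ⟨0, hk⟩)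
  have hspread : ∀ p p' i, q p i - q p' i ≤ 2 * (2 * c1 * √g * √c2) := fun p p' i => by
    simpa only [Fintype.card_fin] using dotProduct_col_sub_sub_le (A i) (b i) hc1 (hA i)
      (fun ω hω => hb i ω hω.1 hω.2) p.1 p.2 p'.1 p'.2
  have hmassart := sum_sup'_signVec_dotProduct_div_le_of_sub_le q (by positivity) hspread
  simp only [Fintype.card_fin, Fintype.card_prod] at hmassart
  calc (1 / m) * ((∑ ε : Fin m → Bool, sSup _) / 2 ^ m)
      ≤ (1 / m) * ((∑ ε : Fin m → Bool, univ.sup' univ_nonempty fun p => signVec ε ⬝ᵥ q p) /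
          2 ^ m) := by
        gcongr with ε
        exact sSup_signVec_dotProduct_sum_sq_mulVec_sub_le A b ε
    _ ≤ (1 / m) * (2 * c1 * √g * √c2 * √(2 * m * Real.log (k * k : ℕ))) := by gcongr
    _ ≤ _ := one_div_mul_sqrt_log_mul_self_le hc1 c2 hk hm
end
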